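/- Let Δ ⊆ Σ and suppose that k words w′₁,…,w′_k over Σ are obtained from k words w₁,…,w_k over Σ by a Δ-insertion. Then w₁,…,w_k are Δ-cyclically equalizable if and only if w′₁,…,w′_k are Δ-cyclically equalizable. -/
import Mathlib


/-- Two words of the same length are *cyclically equal* if one is obtained from the
other by a cyclic shift of positions: there is an integer `δ` such that the `j`-th
letter of `w₂` equals the `((j + δ) mod n)`-th letter of `w₁`. -/
def CyclicallyEqual {α : Type*} (w₁ w₂ : List α) : Prop :=
  w₁.length = w₂.length ∧
    ∃ δ : ℤ, ∀ j : ℕ, j < w₂.length →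
      w₂[j]? = w₁[(((j : ℤ) + δ) % (w₁.length : ℤ)).toNat]?

/-- `riffle w us = u₀ a₀ u₁ a₁ ⋯ u_{n-1} a_{n-1} u_n ⋯`, interleaving the words of
`us` with the letters of `w` (starting with `us.head`), and appending the remaining
words of `us` at the end. -/
def riffle {α : Type*} : List α → List (List α) → List α
  | [], us => us.flatten
  | a :: w, us => us.headD [] ++ a :: riffle w us.tail

/-- `InsertsTo Δ w w'` says that the family of words `w'` is obtained from the family
`w` by a simultaneous `Δ`-insertion: there are words `u₀, …, u_n` over `Δ` (where `n`
is the common length of the `w i`) such that each `w' i` is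
`u₀ a_{i,0} u₁ a_{i,1} ⋯ u_{n-1} a_{i,n-1} u_n` where `w i = a_{i,0} ⋯ a_{i,n-1}`. -/
def InsertsTo {α : Type*} (Δ : Set α) {k : ℕ} (w w' : Fin k → List α) : Prop :=
  ∃ us : List (List α),
    (∀ u ∈ us, ∀ c ∈ u, c ∈ Δ) ∧
    (∀ i, us.length = (w i).length + 1) ∧
    (∀ i, w' i = riffle (w i) us)

/-- A family of words is `Δ`-cyclically equalizable if some `Δ`-insertion transforms
them into pairwise cyclically equal words. -/
def CyclicallyEqualizable {α : Type*} (Δ : Set α) {k : ℕ} (w : Fin k → List α) : Prop :=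
  ∃ w' : Fin k → List α, InsertsTo Δ w w' ∧ ∀ i j, CyclicallyEqual (w' i) (w' j)

namespace InsAux

variable {α : Type*}

theorem riffle_nil (us : List (List α)) : riffle [] us = us.flatten := rfl

theorem riffle_cons (a : α) (w : List α) (us : List (List α)) :
    riffle (a :: w) us = us.headD [] ++ a :: riffle w us.tail := rfl

theorem riffle_all_nil : ∀ (w : List α) (us : List (List α)), (∀ u ∈ us, u = []) →
    riffle w us = w
  | [], us, h => by
    rw [riffle_nil, List.flatten_eq_nil_iff.mpr h]
  | a :: w, us, h => by
    rw [riffle_cons, riffle_all_nil w us.tail (fun u hu => h u (List.mem_of_mem_tail hu))]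
    cases us with
    | nil => simp
    | cons u us => simp [h u (by simp)]

theorem riffle_length : ∀ (w : List α) (us : List (List α)),
    (riffle w us).length = w.length + us.flatten.length
  | [], us => by simp [riffle_nil]
  | a :: w, us => by
    rw [riffle_cons]
    cases us with
    | nil => simp [riffle_length w []]
    | cons u us =>
      simp only [List.headD_cons, List.tail_cons, List.length_append, List.length_cons,
        riffle_length w us, List.flatten_cons, List.length_cons]
      omega

theorem mem_riffle {Δ : Set α} : ∀ (w : List α) (us : List (List α)),
    (∀ c ∈ w, c ∈ Δ) → (∀ u ∈ us, ∀ c ∈ u, c ∈ Δ) → ∀ c ∈ riffle w us, c ∈ Δ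
  | [], us, _, hus, c, hc => by
    rw [riffle_nil] at hc
    obtain ⟨u, hu, hcu⟩ := List.mem_flatten.mp hc
    exact hus u hu c hcu
  | a :: w, us, hw, hus, c, hc => by
    rw [riffle_cons] at hc
    rcases List.mem_append.mp hc with hc | hc
    · cases us with
      | nil => simp at hc
      | cons u us => exact hus u (by simp) c hc
    · rcases List.mem_cons.mp hc with rfl | hc
      · exact hw c (by simp)
      · exact mem_riffle w us.tail (fun x hx => hw x (by simp [hx]))
          (fun u hu => hus u (List.mem_of_mem_tail hu)) c hc

theorem ce_of_rotate {w₁ w₂ : List α} {m : ℕ} (h : w₂ = w₁.rotate m) :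
    CyclicallyEqual w₁ w₂ := by
  subst h
  refine ⟨(List.length_rotate w₁ m).symm, (m : ℤ), fun j hj => ?_⟩
  rw [List.length_rotate] at hj
  have hpos : 0 < w₁.length := by omega
  have h1 : (((j : ℤ) + (m : ℤ)) % (w₁.length : ℤ)).toNat = (j + m) % w₁.length := by
    have : ((j : ℤ) + (m : ℤ)) % (w₁.length : ℤ) = (((j + m) % w₁.length : ℕ) : ℤ) := by
      push_cast; rfl
    rw [this, Int.toNat_natCast]
  rw [h1, List.getElem?_rotate hj]

theorem ce_refl (w : List α) : CyclicallyEqual w w :=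
  ce_of_rotate (m := 0) (by simp)

theorem ce_rotate_exists {w₁ w₂ : List α} (h : CyclicallyEqual w₁ w₂) :
    ∃ m : ℕ, w₂ = w₁.rotate m := by
  obtain ⟨hlen, δ, hδ⟩ := h
  rcases Nat.eq_zero_or_pos w₁.length with h0 | hpos
  · refine ⟨0, ?_⟩
    rw [List.length_eq_zero_iff.mp h0] at hlen ⊢
    exact (List.length_eq_zero_iff.mp hlen.symm)
  · set n := w₁.length with hn
    refine ⟨(δ % (n : ℤ)).toNat, ?_⟩
    have hn0 : (0 : ℤ) < (n : ℤ) := by exact_mod_cast hpos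
    have hnn : (0 : ℤ) ≤ δ % (n : ℤ) := Int.emod_nonneg δ (by omega)
    have hlt : δ % (n : ℤ) < (n : ℤ) := Int.emod_lt_of_pos δ hn0
    set m : ℕ := (δ % (n : ℤ)).toNat with hm
    have hmc : ((m : ℤ)) = δ % (n : ℤ) := Int.toNat_of_nonneg hnn
    apply List.ext_getElem?
    intro j
    rcases Nat.lt_or_ge j w₂.length with hj | hj
    · rw [hδ j hj, List.getElem?_rotate]
      · congr 1
        have e1 : ((j : ℤ) + δ) % (n : ℤ) = ((j : ℤ) + (m : ℤ)) % (n : ℤ) := by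
          rw [hmc, Int.add_emod (j:ℤ) δ, Int.add_emod (j:ℤ) (δ % (n:ℤ)),
            Int.emod_emod_of_dvd δ dvd_rfl]
        have e2 : ((j : ℤ) + (m : ℤ)) % (n : ℤ) = (((j + m) % n : ℕ) : ℤ) := by
          push_cast; rfl
        rw [e1, e2, Int.toNat_natCast]
      · omega
    · rw [List.getElem?_eq_none hj, List.getElem?_eq_none (by rw [List.length_rotate]; omega)]

theorem rotate_flatMap (f : α → List α) (w : List α) (m : ℕ) :
    ∃ m', (w.rotate m).flatMap f = (w.flatMap f).rotate m' := by
  rcases List.eq_nil_or_concat w with rfl | hne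
  · exact ⟨0, by simp⟩
  have hpos : 0 < w.length := by
    obtain ⟨l, a, rfl⟩ := hne; simp
  set m₀ := m % w.length with hm₀
  have hle : m₀ ≤ w.length := le_of_lt (Nat.mod_lt _ hpos)
  refine ⟨((w.take m₀).flatMap f).length, ?_⟩
  rw [← List.rotate_mod, ← hm₀, List.rotate_eq_drop_append_take hle]
  have hsplit : w.flatMap f = (w.take m₀).flatMap f ++ (w.drop m₀).flatMap f := by
    rw [← List.flatMap_append, List.take_append_drop]
  rw [List.flatMap_append, hsplit]
  rw [List.rotate_eq_drop_append_take (by rw [List.length_append]; exact Nat.le_add_right _ _)]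
  rw [List.drop_left, List.take_left]

theorem ce_flatMap (f : α → List α) {w₁ w₂ : List α} (h : CyclicallyEqual w₁ w₂) :
    CyclicallyEqual (w₁.flatMap f) (w₂.flatMap f) := by
  obtain ⟨m, rfl⟩ := ce_rotate_exists h
  obtain ⟨m', hm'⟩ := rotate_flatMap f w₁ m
  exact ce_of_rotate hm'

/-- the part of `riffle u xs` before the gap following the last letter of `u`. -/
def preR : List α → List (List α) → List α
  | [], _ => []
  | c :: u, xs => xs.headD [] ++ c :: preR u xs.tail

theorem riffle_append (u : List α) : ∀ (r : List α) (xs : List (List α)),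
    riffle (u ++ r) xs = preR u xs ++ riffle r (xs.drop u.length) := by
  induction u with
  | nil => intro r xs; simp [preR]
  | cons c u ih =>
    intro r xs
    rw [List.cons_append, riffle_cons, ih r xs.tail, preR]
    simp only [List.length_cons, List.append_assoc, List.cons_append]
    rw [← List.drop_one, List.drop_drop, Nat.add_comm 1 u.length]

theorem riffle_eq_preR : ∀ (u : List α) (ss : List (List α)),
    riffle u ss = preR u ss ++ (ss.drop u.length).flatten
  | [], ss => by simp [riffle_nil, preR]
  | c :: u, ss => by
    rw [riffle_cons, preR, riffle_eq_preR u ss.tail]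
    simp only [List.length_cons, List.append_assoc, List.cons_append]
    rw [← List.drop_one, List.drop_drop, Nat.add_comm 1 u.length]

theorem preR_take : ∀ (u : List α) (xs : List (List α)) (m : ℕ), u.length ≤ m →
    preR u (xs.take m) = preR u xs
  | [], xs, m, _ => rfl
  | c :: u, xs, m, h => by
    have hm : m = (m - 1) + 1 := by simp at h; omega
    rw [preR, preR]
    cases xs with
    | nil => simp [preR_take u [] (m-1) (by simp at h; omega)]
    | cons x xs =>
      rw [hm, List.take_succ_cons]
      simp only [List.headD_cons, List.tail_cons]
      rw [preR_take u xs (m-1) (by simp at h; omega)]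

/-- compose two layers of insertions -/
def comp : List (List α) → List (List α) → List (List α)
  | [], _ => []
  | u :: us, xs => riffle u (xs.take (u.length + 1)) :: comp us (xs.drop (u.length + 1))

theorem comp_length : ∀ (us xs : List (List α)), (comp us xs).length = us.length
  | [], _ => rfl
  | u :: us, xs => by rw [comp, List.length_cons, List.length_cons, comp_length us]

theorem comp_mem {Δ : Set α} : ∀ (us xs : List (List α)),
    (∀ u ∈ us, ∀ c ∈ u, c ∈ Δ) → (∀ x ∈ xs, ∀ c ∈ x, c ∈ Δ) →
    ∀ y ∈ comp us xs, ∀ c ∈ y, c ∈ Δ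
  | [], xs, _, _, y, hy => by simp [comp] at hy
  | u :: us, xs, hus, hxs, y, hy => by
    rw [comp] at hy
    rcases List.mem_cons.mp hy with rfl | hy
    · exact mem_riffle u _ (hus u (by simp))
        (fun x hx => hxs x (List.mem_of_mem_take hx))
    · exact comp_mem us _ (fun v hv => hus v (by simp [hv]))
        (fun x hx => hxs x (List.mem_of_mem_drop hx)) y hy

theorem flatten_take_one (l : List (List α)) : (l.take 1).flatten = l.headD [] := by
  cases l <;> simp

theorem riffle_riffle : ∀ (w : List α) (us xs : List (List α)),
    us.length = w.length + 1 → xs.length = (riffle w us).length + 1 →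
    riffle (riffle w us) xs = riffle w (comp us xs)
  | [], us, xs, hl, hxl => by
    obtain ⟨u, rfl⟩ : ∃ u, us = [u] := by
      cases us with
      | nil => simp at hl
      | cons u us => cases us with
        | nil => exact ⟨u, rfl⟩
        | cons _ _ => simp at hl
    rw [riffle_nil] at hxl ⊢
    simp only [List.flatten_cons, List.flatten_nil, List.append_nil] at hxl ⊢
    rw [comp, comp, riffle_nil, List.flatten_cons, List.flatten_nil, List.append_nil,
      List.take_of_length_le (by omega)]
  | a :: w, us, xs, hl, hxl => by
    obtain ⟨u, us, rfl⟩ : ∃ v vs, us = v :: vs := by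
      cases us with
      | nil => simp at hl
      | cons u us => exact ⟨u, us, rfl⟩
    rw [riffle_cons, List.headD_cons, List.tail_cons, riffle_append,
      riffle_cons, comp, riffle_cons, List.headD_cons, List.tail_cons]
    have hdt : (xs.drop u.length).tail = xs.drop (u.length + 1) := by
      rw [← List.drop_one, List.drop_drop]
    rw [hdt]
    have hlens : xs.length = w.length + u.length + us.flatten.length + 2 := by
      rw [hxl, riffle_cons, List.headD_cons, List.tail_cons]
      simp [riffle_length]
      omega
    rw [riffle_riffle w us (xs.drop (u.length + 1))
      (by simpa using hl) (by rw [List.length_drop, riffle_length]; omega)]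
    have hpre : preR u xs ++ (xs.drop u.length).headD [] = riffle u (xs.take (u.length + 1)) := by
      rw [riffle_eq_preR, preR_take u xs (u.length + 1) (by omega), List.drop_take]
      have h1 : u.length + 1 - u.length = 1 := by omega
      rw [h1, flatten_take_one]
    rw [← hpre]
    simp

/-- Gap lists for embedding `P ++ u ++ Q` around the block `u`. -/
def segGaps : List α → List α → List α → List (List α)
  | P, [], Q => [P ++ Q]
  | P, _ :: u, Q => P :: segGaps [] u Q

theorem segGaps_length : ∀ (P u Q : List α), (segGaps P u Q).length = u.length + 1
  | _, [], _ => rfl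
  | P, c :: u, Q => by rw [segGaps, List.length_cons, segGaps_length, List.length_cons]

theorem riffle_segGaps : ∀ (P u Q : List α), riffle u (segGaps P u Q) = P ++ u ++ Q
  | P, [], Q => by simp [segGaps, riffle_nil]
  | P, c :: u, Q => by
    rw [segGaps, riffle_cons, List.headD_cons, List.tail_cons, riffle_segGaps [] u Q]
    simp

theorem segGaps_mem {Δ : Set α} : ∀ (P u Q : List α), (∀ c ∈ P, c ∈ Δ) → (∀ c ∈ Q, c ∈ Δ) →
    ∀ x ∈ segGaps P u Q, ∀ c ∈ x, c ∈ Δ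
  | P, [], Q, hP, hQ, x, hx => by
    simp only [segGaps, List.mem_singleton] at hx
    subst hx
    intro c hc
    rcases List.mem_append.mp hc with hc | hc
    · exact hP c hc
    · exact hQ c hc
  | P, c :: u, Q, hP, hQ, x, hx => by
    rw [segGaps] at hx
    rcases List.mem_cons.mp hx with rfl | hx
    · exact hP
    · exact segGaps_mem [] u Q (by simp) hQ x hx

theorem comp_flatten_seg : ∀ (ts : List (List α × List α × List α)),
    comp (ts.map (fun t => t.2.1)) ((ts.map (fun t => segGaps t.1 t.2.1 t.2.2)).flatten)
      = ts.map (fun t => t.1 ++ t.2.1 ++ t.2.2)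
  | [] => rfl
  | t :: ts => by
    rw [List.map_cons, List.map_cons, List.flatten_cons, comp, List.map_cons]
    rw [List.take_left' (segGaps_length _ _ _), List.drop_left' (segGaps_length _ _ _),
      riffle_segGaps, comp_flatten_seg ts]

theorem seg_flatten_length : ∀ (ts : List (List α × List α × List α)),
    ((ts.map (fun t => segGaps t.1 t.2.1 t.2.2)).flatten).length
      = ((ts.map (fun t => t.2.1)).flatten).length + ts.length
  | [] => rfl
  | t :: ts => by
    rw [List.map_cons, List.flatten_cons, List.length_append, seg_flatten_length ts,
      List.map_cons, List.flatten_cons, List.length_append, segGaps_length]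
    simp only [List.length_cons]
    omega

def hU (U : List α) (a : α) : List α := U ++ a :: U

def gapA (U : List α) : List (List α) → List (List α)
  | [] => []
  | [v] => [U ++ v.flatMap (hU U)]
  | v :: v' :: vs => (U ++ v.flatMap (hU U) ++ U) :: gapA U (v' :: vs)

def gapU (U : List α) : List (List α) → List (List α)
  | [] => []
  | v :: vs => (v.flatMap (hU U) ++ U) :: gapA U vs

theorem gapA_aux (U : List α) : ∀ (w : List α) (vs : List (List α)),
    vs.length = w.length + 1 →
    U ++ (riffle w vs).flatMap (hU U) = riffle w (gapA U vs)
  | [], vs, hl => by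
    obtain ⟨v, rfl⟩ : ∃ v, vs = [v] := by
      cases vs with
      | nil => simp at hl
      | cons v vs => cases vs with
        | nil => exact ⟨v, rfl⟩
        | cons _ _ => simp at hl
    simp [riffle_nil, gapA]
  | a :: w, vs, hl => by
    obtain ⟨v, v', vs, rfl⟩ : ∃ x y l, vs = x :: y :: l := by
      cases vs with
      | nil => simp at hl
      | cons v vs => cases vs with
        | nil => simp at hl
        | cons v' vs => exact ⟨v, v', vs, rfl⟩
    rw [riffle_cons, List.headD_cons, List.tail_cons, gapA, riffle_cons, List.headD_cons,
      List.tail_cons]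
    rw [← gapA_aux U w (v' :: vs) (by simpa using hl)]
    simp [hU]

theorem gapU_main (U : List α) : ∀ (a : α) (w : List α) (vs : List (List α)),
    vs.length = w.length + 2 →
    (riffle (a :: w) vs).flatMap (hU U) = riffle (a :: w) (gapU U vs)
  | a, w, vs, hl => by
    obtain ⟨v, vs, rfl⟩ : ∃ x l, vs = x :: l := by
      cases vs with
      | nil => simp at hl
      | cons v vs => exact ⟨v, vs, rfl⟩
    rw [riffle_cons, List.headD_cons, List.tail_cons, gapU, riffle_cons, List.headD_cons,
      List.tail_cons]
    rw [← gapA_aux U w vs (by simpa using hl)]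
    simp [hU]

/-- remaining triples for the middle/last gaps -/
def tsA (U : List α) : List α → List (List α) → List (List α) →
    List (List α × List α × List α)
  | A, [u], [v] => [(A, u, v.flatMap (hU U))]
  | A, u :: u' :: us, v :: v' :: vs =>
      (A, u, (u' :: us).flatten ++ v.flatMap (hU U) ++ U) :: tsA U (A ++ u) (u' :: us) (v' :: vs)
  | _, _, _ => []

def mkTs (U : List α) : List (List α) → List (List α) → List (List α × List α × List α)
  | u :: us, v :: vs => (v.flatMap (hU U), u, us.flatten) :: tsA U u us vs
  | _, _ => []

theorem tsA_fst (U : List α) : ∀ (A : List α) (us vs : List (List α)),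
    us.length = vs.length → (tsA U A us vs).map (fun t => t.2.1) = us
  | A, [], [], _ => rfl
  | A, [u], [v], _ => rfl
  | A, u :: u' :: us, v :: v' :: vs, hl => by
    rw [tsA, List.map_cons, tsA_fst U (A ++ u) (u' :: us) (v' :: vs) (by simpa using hl)]
  | A, [], v :: vs, hl => by simp at hl
  | A, u :: us, [], hl => by simp at hl
  | A, [u], v :: v' :: vs, hl => by simp at hl
  | A, u :: u' :: us, [v], hl => by simp at hl

theorem tsA_gap (U : List α) : ∀ (A : List α) (us vs : List (List α)),
    us.length = vs.length → A ++ us.flatten = U →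
    (tsA U A us vs).map (fun t => t.1 ++ t.2.1 ++ t.2.2) = gapA U vs
  | A, [], [], _, _ => rfl
  | A, [u], [v], _, hA => by
    rw [tsA, List.map_cons, List.map_nil, gapA]
    simp at hA
    simp [hA]
  | A, u :: u' :: us, v :: v' :: vs, hl, hA => by
    rw [tsA, List.map_cons, gapA,
      tsA_gap U (A ++ u) (u' :: us) (v' :: vs) (by simpa using hl) (by simp at hA ⊢; simp [hA])]
    have : A ++ u ++ (u' :: us).flatten = U := by simp at hA ⊢; simp [hA]
    simp only [← this]
    simp
  | A, [], v :: vs, hl, _ => by simp at hl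
  | A, u :: us, [], hl, _ => by simp at hl
  | A, [u], v :: v' :: vs, hl, _ => by simp at hl
  | A, u :: u' :: us, [v], hl, _ => by simp at hl

theorem tsA_mem {Δ : Set α} (U : List α) (hUm : ∀ c ∈ U, c ∈ Δ) :
    ∀ (A : List α) (us vs : List (List α)),
    (∀ c ∈ A, c ∈ Δ) → (∀ u ∈ us, ∀ c ∈ u, c ∈ Δ) → (∀ v ∈ vs, ∀ c ∈ v, c ∈ Δ) →
    ∀ t ∈ tsA U A us vs, (∀ c ∈ t.1, c ∈ Δ) ∧ (∀ c ∈ t.2.2, c ∈ Δ)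
  | A, [u], [v], hA, hus, hvs, t, ht => by
    rw [tsA, List.mem_singleton] at ht
    subst ht
    refine ⟨hA, ?_⟩
    intro c hc
    simp only [List.mem_flatMap] at hc
    obtain ⟨b, hb, hcb⟩ := hc
    simp only [hU, List.mem_append, List.mem_cons] at hcb
    rcases hcb with hc' | hc' | hc'
    · exact hUm c hc'
    · subst hc'; exact hvs v (by simp) c hb
    · exact hUm c hc'
  | A, u :: u' :: us, v :: v' :: vs, hA, hus, hvs, t, ht => by
    rw [tsA, List.mem_cons] at ht
    rcases ht with rfl | ht
    · refine ⟨hA, ?_⟩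
      intro c hc
      simp only [List.mem_append] at hc
      rcases hc with (hc | hc) | hc
      · obtain ⟨b, hb, hcb⟩ := List.mem_flatten.mp hc
        exact hus b (by simp [List.mem_of_mem_tail, hb]) c hcb
      · obtain ⟨b, hb, hcb⟩ := List.mem_flatMap.mp hc
        simp only [hU, List.mem_append, List.mem_cons] at hcb
        rcases hcb with hc' | hc' | hc'
        · exact hUm c hc'
        · subst hc'; exact hvs v (by simp) c hb
        · exact hUm c hc'
      · exact hUm c hc
    · refine tsA_mem U hUm (A ++ u) (u' :: us) (v' :: vs) ?_
        (fun x hx => hus x (by simp [hx])) (fun x hx => hvs x (by simp [hx])) t ht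
      intro c hc
      rcases List.mem_append.mp hc with hc | hc
      · exact hA c hc
      · exact hus u (by simp) c hc
  | A, [], _, _, _, _, t, ht => by simp [tsA] at ht
  | A, _ :: _, [], _, _, _, t, ht => by cases ‹List (List α)› <;> simp [tsA] at ht
  | A, [u], v :: v' :: vs, _, _, _, t, ht => by simp [tsA] at ht
  | A, u :: u' :: us, [v], _, _, _, t, ht => by simp [tsA] at ht

end InsAux

open InsAux in
/-- A `Δ`-insertion preserves `Δ`-cyclic equalizability: if `w'₁, …, w'_k` are
obtained from `w₁, …, w_k` by a `Δ`-insertion, then the former are `Δ`-cyclically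
equalizable iff the latter are. -/
theorem insertion_preserves_cyclic_equalizability
    {α : Type*} (Δ : Set α) {k : ℕ} (w w' : Fin k → List α)
    (h : InsertsTo Δ w w') :
    CyclicallyEqualizable Δ w ↔ CyclicallyEqualizable Δ w' := by
  obtain ⟨us, husm, husl, hw'⟩ := h
  constructor
  · rintro ⟨t, ⟨vs, hvsm, hvsl, ht⟩, hpair⟩
    rcases Nat.eq_zero_or_pos k with hk | hk
    · subst hk
      exact ⟨w', ⟨[], by simp, fun i => i.elim0, fun i => i.elim0⟩, fun i => i.elim0⟩
    set i₀ : Fin k := ⟨0, hk⟩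
    set n := (w i₀).length with hn
    have hnl : ∀ i, (w i).length = n := fun i => by
      have h1 := husl i; have h2 := husl i₀; omega
    rcases Nat.eq_zero_or_pos n with hn0 | hnpos
    · -- all words empty: w' i = us.flatten for every i
      have hwnil : ∀ i, w i = [] := fun i => List.length_eq_zero_iff.mp (by rw [hnl i, hn0])
      have hweq : ∀ i, w' i = us.flatten := fun i => by rw [hw' i, hwnil i, riffle_nil]
      refine ⟨w', ⟨List.replicate (us.flatten.length + 1) [], ?_, ?_, ?_⟩, ?_⟩
      · intro u hu c hc; rw [List.eq_of_mem_replicate hu] at hc; simp at hc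
      · intro i; rw [hweq i]; simp
      · intro i
        rw [riffle_all_nil _ _ (fun u hu => List.eq_of_mem_replicate hu)]
      · intro i j; rw [hweq i, hweq j]; exact ce_refl _
    · -- main case
      set U := us.flatten with hUdef
      have hUm : ∀ c ∈ U, c ∈ Δ := by
        intro c hc
        obtain ⟨u, hu, hcu⟩ := List.mem_flatten.mp hc
        exact husm u hu c hcu
      have husl0 : us.length = n + 1 := husl i₀
      have hvsl0 : vs.length = n + 1 := hvsl i₀
      obtain ⟨u0, ust, rfl⟩ : ∃ x l, us = x :: l := by
        cases us with
        | nil => simp at husl0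
        | cons u us => exact ⟨u, us, rfl⟩
      obtain ⟨v0, vst, rfl⟩ : ∃ x l, vs = x :: l := by
        cases vs with
        | nil => simp at hvsl0
        | cons v vs => exact ⟨v, vs, rfl⟩
      set ts := mkTs U (u0 :: ust) (v0 :: vst) with hts
      have htseq : ts = (v0.flatMap (hU U), u0, ust.flatten) :: tsA U u0 ust vst := rfl
      have hfst : ts.map (fun t => t.2.1) = u0 :: ust := by
        rw [htseq, List.map_cons, tsA_fst U u0 ust vst (by simp at husl0 hvsl0; omega)]
      have hgap : ts.map (fun t => t.1 ++ t.2.1 ++ t.2.2) = gapU U (v0 :: vst) := by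
        rw [htseq, List.map_cons, gapU,
          tsA_gap U u0 ust vst (by simp at husl0 hvsl0; omega) (by rw [hUdef]; simp)]
        have hU0 : v0.flatMap (hU U) ++ u0 ++ ust.flatten = v0.flatMap (hU U) ++ U := by
          rw [hUdef]; simp
        rw [hU0]
      set xs := (ts.map (fun t => segGaps t.1 t.2.1 t.2.2)).flatten with hxs
      have htslen : ts.length = n + 1 := by
        have h1 := congrArg List.length hfst
        simp at h1 husl0
        omega
      have hxlen : xs.length = U.length + (n + 1) := by
        rw [hxs, seg_flatten_length, hfst, htslen, hUdef]
      have hcomp : comp (u0 :: ust) xs = gapU U (v0 :: vst) := by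
        rw [← hgap, ← hfst, hxs]
        exact comp_flatten_seg ts
      have hkey : ∀ i, riffle (w' i) xs = (t i).flatMap (hU U) := by
        intro i
        rw [hw' i, riffle_riffle (w i) (u0 :: ust) xs (husl i)
          (by rw [riffle_length, ← hUdef, hxlen, hnl i]; omega), hcomp, ht i]
        obtain ⟨a, r, hr⟩ : ∃ a r, w i = a :: r := by
          cases hwi : w i with
          | nil => exfalso; have := hnl i; rw [hwi] at this; simp at this; omega
          | cons a r => exact ⟨a, r, rfl⟩
        rw [hr, gapU_main U a r (v0 :: vst) (by have := hnl i; rw [hr] at this; simp at this; omega)]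
      have hmemxs : ∀ x ∈ xs, ∀ c ∈ x, c ∈ Δ := by
        intro x hx
        rw [hxs] at hx
        obtain ⟨l, hl, hxl⟩ := List.mem_flatten.mp hx
        obtain ⟨tt, htt, rfl⟩ := List.mem_map.mp hl
        have hcomp2 : (∀ c ∈ tt.1, c ∈ Δ) ∧ (∀ c ∈ tt.2.2, c ∈ Δ) := by
          rw [htseq, List.mem_cons] at htt
          rcases htt with rfl | htt
          · constructor
            · intro c hc
              obtain ⟨b, hb, hcb⟩ := List.mem_flatMap.mp hc
              simp only [hU, List.mem_append, List.mem_cons] at hcb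
              rcases hcb with hc' | hc' | hc'
              · exact hUm c hc'
              · subst hc'; exact hvsm v0 (by simp) c hb
              · exact hUm c hc'
            · intro c hc
              obtain ⟨b, hb, hcb⟩ := List.mem_flatten.mp hc
              exact husm b (by simp [hb]) c hcb
          · exact tsA_mem U hUm u0 ust vst (husm u0 (by simp))
              (fun x hx => husm x (by simp [hx])) (fun x hx => hvsm x (by simp [hx])) tt htt
        exact segGaps_mem tt.1 tt.2.1 tt.2.2 hcomp2.1 hcomp2.2 x hxl
      refine ⟨fun i => (t i).flatMap (hU U), ⟨xs, hmemxs, ?_, ?_⟩, ?_⟩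
      · intro i
        rw [hw' i, riffle_length, ← hUdef, hxlen, hnl i]
        omega
      · intro i
        exact (hkey i).symm
      · intro i j
        exact ce_flatMap (hU U) (hpair i j)
  · rintro ⟨t, ⟨xs, hxm, hxl, ht⟩, hpair⟩
    refine ⟨t, ⟨comp us xs, comp_mem us xs husm hxm, ?_, ?_⟩, hpair⟩
    · intro i
      rw [comp_length]
      exact husl i
    · intro i
      rw [ht i, hw' i, riffle_riffle (w i) us xs (husl i) (by rw [← hw' i]; exact hxl i)]
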